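/- Let G = (L ⊔ R, E) be an (r, Δ, c)-boundary expander, J ⊆ R with |Ext_G(J)| ≤ cr/4, and G' = G \ Ext_G(J). Then for every J' ⊆ R \ Ext_G(J) with |Ext_G(J ∪ J')| ≤ cr/4, one has Cl_G(J ∪ J') = Cl_G(J) ∪ Cl_{G'}(J'), and consequently G' \ Ext_{G'}(J') = G \ Ext_G(J ∪ J'). -/

import Mathlib

open Finset

variable {L R : Type*} [Fintype L] [Fintype R] [DecidableEq L] [DecidableEq R]

/-- The set of neighbours of `I ⊆ L` in the bipartite graph with adjacency `A`. -/
def nbhd (A : L → R → Prop) [∀ a b, Decidable (A a b)] (I : Finset L) : Finset R :=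
  Finset.univ.filter (fun b => ∃ a ∈ I, A a b)

/-- The boundary of `I ⊆ L`: vertices of `R` adjacent to exactly one vertex of `I`. -/
def bdry (A : L → R → Prop) [∀ a b, Decidable (A a b)] (I : Finset L) : Finset R :=
  Finset.univ.filter (fun b => (I.filter (fun a => A a b)).card = 1)

/-- Degree of a left vertex. -/
def ldeg (A : L → R → Prop) [∀ a b, Decidable (A a b)] (a : L) : ℕ :=
  (Finset.univ.filter (fun b => A a b)).card

/-- `(r, Δ, c)`-boundary expander. -/
def IsBoundaryExpander (A : L → R → Prop) [∀ a b, Decidable (A a b)] (r Δ : ℕ) (c : ℝ) : Prop :=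
  (∀ a : L, ldeg A a ≤ Δ) ∧
  ∀ I : Finset L, I.card ≤ r → c * I.card ≤ ((bdry A I).card : ℝ)

/-- `I` is `(r, J)`-contained: `|I| ≤ r` and `∂(I) ⊆ J`. -/
def IsContained (A : L → R → Prop) [∀ a b, Decidable (A a b)] (r : ℕ) (J : Finset R) (I : Finset L) : Prop :=
  I.card ≤ r ∧ bdry A I ⊆ J

/-- `I` is a closure of `J`: an `(r, J)`-contained set of maximal size. -/
def IsClosure (A : L → R → Prop) [∀ a b, Decidable (A a b)] (r : ℕ) (J : Finset R) (I : Finset L) : Prop :=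
  IsContained A r J I ∧ ∀ I' : Finset L, IsContained A r J I' → I'.card ≤ I.card

/-- `(r, Δ, c)`-weak (boundary) expander. -/
def IsWeakExpander (A : L → R → Prop) [∀ a b, Decidable (A a b)] (r Δ : ℕ) (c : ℝ) : Prop :=
  (∀ a : L, ldeg A a ≤ Δ) ∧
  (∀ I : Finset L, I.Nonempty → (I.card : ℝ) ≤ r / 2 → (bdry A I).Nonempty) ∧
  (∀ I : Finset L, (r : ℝ) / 2 < I.card → I.card ≤ r → c * I.card ≤ ((bdry A I).card : ℝ))

/-- `I` is `(r, J)`-contained in the subgraph of `G` with adjacency `A'` and left part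
`Lset`. -/
def IsContainedIn (A' : L → R → Prop) [∀ a b, Decidable (A' a b)]
    (Lset : Finset L) (r : ℕ) (J : Finset R) (I : Finset L) : Prop :=
  I ⊆ Lset ∧ I.card ≤ r ∧ bdry A' I ⊆ J

/-- `I` is a closure of `J` in the subgraph: a maximal-size contained set. -/
def IsClosureIn (A' : L → R → Prop) [∀ a b, Decidable (A' a b)]
    (Lset : Finset L) (r : ℕ) (J : Finset R) (I : Finset L) : Prop :=
  IsContainedIn A' Lset r J I ∧
  ∀ I' : Finset L, IsContainedIn A' Lset r J I' → I'.card ≤ I.card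

/-!
Both closures are small: the expansion bound `c |I| ≤ |∂I|` with `|∂I| ≤ cr/4` gives
`|Cl_G(J)|, |Cl_G(J ∪ J')| ≤ r/4`, and in `G'` (whose boundaries lose at most the vertices of
`Ext_G(J)`) it gives `|Cl_{G'}(J')| ≤ r/2`. So every union of these sets has at most `r`
elements, and maximality of a closure applies to it. Outside `Ext_G(J)` the vertices of `Cl_G(J)` have no neighbours,
so there `∂_G(Cl_G(J) ∪ K) = ∂_{G'}(K)`: this shows both that `Cl_G(J) ∪ Cl_{G'}(J')` is
`(r, J ∪ J')`-contained and that `Cl_G(J ∪ J') \ Cl_G(J)` is `(r, J')`-contained in `G'`. The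
latter set lies in the left part of `G'`, because a vertex of `Cl_G(J ∪ J')` all of whose
neighbours lie in `Ext_G(J)` could be added to `Cl_G(J)` without creating boundary outside `J`.
-/

section Bipartite

variable {α β : Type*} [Fintype β] {A : α → β → Prop} [∀ a b, Decidable (A a b)]

theorem mem_nbhd {I : Finset α} {b : β} : b ∈ nbhd A I ↔ ∃ a ∈ I, A a b := by
  simp [nbhd]

theorem mem_bdry {I : Finset α} {b : β} : b ∈ bdry A I ↔ #(I.filter (A · b)) = 1 := by
  simp [bdry]

theorem nbhd_union [DecidableEq α] [DecidableEq β] (I K : Finset α) :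
    nbhd A (I ∪ K) = nbhd A I ∪ nbhd A K := by
  ext b
  simp only [mem_union, mem_nbhd, or_and_right, exists_or]

theorem bdry_subset_nbhd (I : Finset α) : bdry A I ⊆ nbhd A I := by
  intro b hb
  obtain ⟨a, ha⟩ := card_eq_one.mp (mem_bdry.mp hb)
  exact mem_nbhd.mpr ⟨a, mem_filter.mp (ha ▸ mem_singleton_self a)⟩

theorem filter_eq_empty_of_notMem_nbhd {I : Finset α} {b : β} (hb : b ∉ nbhd A I) :
    I.filter (A · b) = ∅ :=
  filter_eq_empty_iff.mpr fun a ha hab => hb (mem_nbhd.mpr ⟨a, ha, hab⟩)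

theorem bdry_union_subset [DecidableEq α] [DecidableEq β] (I K : Finset α) :
    bdry A (I ∪ K) ⊆ bdry A I ∪ (bdry A K \ nbhd A I) := by
  intro b hb
  rw [mem_bdry, filter_union] at hb
  by_cases hbI : b ∈ nbhd A I
  · refine mem_union_left _ (mem_bdry.mpr (le_antisymm ?_ ?_))
    · exact hb ▸ card_le_card subset_union_left
    · obtain ⟨a, ha, hab⟩ := mem_nbhd.mp hbI
      exact card_pos.mpr ⟨a, mem_filter.mpr ⟨ha, hab⟩⟩
  · rw [filter_eq_empty_of_notMem_nbhd hbI, empty_union] at hb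
    exact mem_union_right _ (mem_sdiff.mpr ⟨mem_bdry.mpr hb, hbI⟩)

theorem bdry_sdiff_nbhd_subset_bdry_union [DecidableEq α] [DecidableEq β] (I K : Finset α) :
    bdry A K \ nbhd A I ⊆ bdry A (I ∪ K) := by
  intro b hb
  obtain ⟨hbK, hbI⟩ := mem_sdiff.mp hb
  rwa [mem_bdry, filter_union, filter_eq_empty_of_notMem_nbhd hbI, empty_union, ← mem_bdry]

section Restrict

variable [DecidableEq β] {A' : α → β → Prop} [∀ a b, Decidable (A' a b)] {S : Finset β}

theorem nbhd_eq_sdiff_of_restrict (hA' : ∀ a b, A' a b ↔ A a b ∧ b ∉ S) (I : Finset α) :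
    nbhd A' I = nbhd A I \ S := by
  ext b
  simp only [mem_nbhd, mem_sdiff, hA']
  exact ⟨fun ⟨a, ha, hab, hb⟩ => ⟨⟨a, ha, hab⟩, hb⟩,
    fun ⟨⟨a, ha, hab⟩, hb⟩ => ⟨a, ha, hab, hb⟩⟩

theorem bdry_eq_sdiff_of_restrict (hA' : ∀ a b, A' a b ↔ A a b ∧ b ∉ S) (I : Finset α) :
    bdry A' I = bdry A I \ S := by
  ext b
  by_cases hb : b ∈ S
  · have : I.filter (A' · b) = ∅ := filter_eq_empty_iff.mpr fun a _ h => ((hA' a b).mp h).2 hb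
    simp [mem_bdry, this, hb]
  · have : I.filter (A' · b) = I.filter (A · b) := filter_congr fun a _ => by simp [hA', hb]
    simp [mem_bdry, this, hb]

theorem bdry_subset_bdry_restrict_union (hA' : ∀ a b, A' a b ↔ A a b ∧ b ∉ S)
    (I : Finset α) : bdry A I ⊆ bdry A' I ∪ S := by
  rw [bdry_eq_sdiff_of_restrict hA', sdiff_union_self_eq_union]
  exact subset_union_left

variable [DecidableEq α] {J J' : Finset β} {I K : Finset α}

theorem bdry_restrict_sdiff_subset (hA' : ∀ a b, A' a b ↔ A a b ∧ b ∉ J ∪ nbhd A I)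
    (hIK : I ⊆ K) (hK : bdry A K ⊆ J ∪ J') : bdry A' (K \ I) ⊆ J' := by
  intro b hb
  obtain ⟨hb, hbS⟩ := mem_sdiff.mp (bdry_eq_sdiff_of_restrict hA' _ ▸ hb)
  have hbK : b ∈ bdry A K := union_sdiff_of_subset hIK ▸
    bdry_sdiff_nbhd_subset_bdry_union I (K \ I) (mem_sdiff.mpr ⟨hb, fun h => hbS (by simp [h])⟩)
  exact (mem_union.mp (hK hbK)).resolve_left fun h => hbS (by simp [h])

theorem bdry_union_restrict_subset (hA' : ∀ a b, A' a b ↔ A a b ∧ b ∉ J ∪ nbhd A I)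
    (hI : bdry A I ⊆ J) (hK : bdry A' K ⊆ J') : bdry A (I ∪ K) ⊆ J ∪ J' := by
  refine (bdry_union_subset I K).trans (union_subset (hI.trans subset_union_left) ?_)
  intro b hb
  obtain ⟨hbK, hbI⟩ := mem_sdiff.mp hb
  by_cases hbS : b ∈ J ∪ nbhd A I
  · exact mem_union_left _ ((mem_union.mp hbS).resolve_right hbI)
  · rw [bdry_eq_sdiff_of_restrict hA'] at hK
    exact mem_union_right _ (hK (mem_sdiff.mpr ⟨hbK, hbS⟩))

end Restrict

end Bipartite

section Closure

variable {α β : Type*} [Fintype β] {A : α → β → Prop} [∀ a b, Decidable (A a b)]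
  [DecidableEq α] [DecidableEq β] {r : ℕ} {J : Finset β} {I Icl : Finset α}

theorem IsClosure.subset (h : IsClosure A r J Icl) (hI : bdry A I ⊆ J)
    (hcard : #(I ∪ Icl) ≤ r) : I ⊆ Icl := by
  have hcont : IsContained A r J (I ∪ Icl) :=
    ⟨hcard, (bdry_union_subset I Icl).trans (union_subset hI (sdiff_subset.trans h.1.2))⟩
  exact union_eq_right.mp (eq_of_subset_of_card_le subset_union_right (h.2 _ hcont)).symm

theorem IsClosureIn.subset {A' : α → β → Prop} [∀ a b, Decidable (A' a b)]
    {Lset : Finset α} (h : IsClosureIn A' Lset r J Icl) (hL : I ⊆ Lset) (hI : bdry A' I ⊆ J)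
    (hcard : #(I ∪ Icl) ≤ r) : I ⊆ Icl := by
  have hcont : IsContainedIn A' Lset r J (I ∪ Icl) :=
    ⟨union_subset hL h.1.1, hcard,
      (bdry_union_subset I Icl).trans (union_subset hI (sdiff_subset.trans h.1.2.2))⟩
  exact union_eq_right.mp (eq_of_subset_of_card_le subset_union_right (h.2 _ hcont)).symm

theorem IsClosure.mem_of_adj_imp_mem (h : IsClosure A r J Icl) {a : α}
    (ha : ∀ b, A a b → b ∈ J ∪ nbhd A Icl) (hcard : #(insert a Icl) ≤ r) : a ∈ Icl := by
  have hbdry : bdry A (insert a Icl) ⊆ J := by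
    rw [insert_eq, union_comm]
    refine (bdry_union_subset Icl {a}).trans (union_subset h.1.2 ?_)
    intro b hb
    obtain ⟨hba, hbI⟩ := mem_sdiff.mp hb
    obtain ⟨_, ha', hab⟩ := mem_nbhd.mp (bdry_subset_nbhd _ hba)
    exact (mem_union.mp (ha b (mem_singleton.mp ha' ▸ hab))).resolve_right hbI
  exact h.subset hbdry (by rwa [union_eq_left.mpr (subset_insert a Icl)])
    (mem_insert_self a Icl)

theorem IsClosure.sdiff_subset_of_restrict (h : IsClosure A r J Icl)
    {K Lset : Finset α} (hIK : Icl ⊆ K) (hK : #K ≤ r)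
    (hLset : ∀ a, a ∈ Lset ↔ ∃ b, A a b ∧ b ∉ J ∪ nbhd A Icl) : K \ Icl ⊆ Lset := by
  intro a ha
  obtain ⟨haK, haI⟩ := mem_sdiff.mp ha
  by_contra haL
  refine haI (h.mem_of_adj_imp_mem (fun b hab => ?_)
    ((card_le_card (insert_subset haK hIK)).trans hK))
  by_contra hb
  exact haL ((hLset a).mpr ⟨b, hab, hb⟩)

end Closure

theorem IsBoundaryExpander.mul_card_le {α β : Type*} [Fintype β] {A : α → β → Prop}
    [∀ a b, Decidable (A a b)] {r Δ : ℕ} {c : ℝ} (hexp : IsBoundaryExpander A r Δ c)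
    (hc : 0 < c) {I : Finset α} (hI : #I ≤ r) {T : Finset β} (hIT : bdry A I ⊆ T) {k : ℕ}
    (hk : 0 < k) (hT : (#T : ℝ) ≤ c * r / k) : k * #I ≤ r := by
  have hbdry := (hexp.2 I hI).trans ((Nat.mono_cast (card_le_card hIT)).trans hT)
  have h := (le_div_iff₀ (Nat.cast_pos.mpr hk)).mp hbdry
  have : c * (k * #I : ℕ) ≤ c * r := by push_cast; linarith
  exact_mod_cast le_of_mul_le_mul_left this hc

theorem closure_step_by_step_general (A : L → R → Prop) [∀ a b, Decidable (A a b)]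
    (r Δ : ℕ) (c : ℝ) (hc : 0 < c)
    (hexp : IsBoundaryExpander A r Δ c)
    (J : Finset R) (IclJ : Finset L) (hIclJ : IsClosure A r J IclJ)
    (ext : Finset R) (hextdef : ext = J ∪ nbhd A IclJ)
    (hext : (ext.card : ℝ) ≤ c * r / 4)
    -- the subgraph `G' = G \ Ext_G(J)`
    (A' : L → R → Prop) [∀ a b, Decidable (A' a b)]
    (hA' : ∀ a b, A' a b ↔ A a b ∧ b ∉ ext)
    (Lset : Finset L) (hLset : ∀ a, a ∈ Lset ↔ ∃ b, A a b ∧ b ∉ ext)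
    (J' : Finset R)
    (Icl' : Finset L) (hIcl' : IsClosureIn A' Lset r J' Icl')
    (IclAll : Finset L) (hIclAll : IsClosure A r (J ∪ J') IclAll)
    (hextAll : (((J ∪ J') ∪ nbhd A IclAll).card : ℝ) ≤ c * r / 4) :
    IclAll = IclJ ∪ Icl' ∧
    ext ∪ (J' ∪ nbhd A' Icl') = (J ∪ J') ∪ nbhd A IclAll := by
  subst hextdef
  have hJJ' : (#(J ∪ J') : ℝ) ≤ c * r / 4 :=
    (Nat.mono_cast (card_le_card subset_union_left)).trans hextAll
  have hJ : (#J : ℝ) ≤ c * r / 4 := (Nat.mono_cast (card_le_card subset_union_left)).trans hext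
  have hJ'_ext : (#(J' ∪ (J ∪ nbhd A IclJ)) : ℝ) ≤ c * r / 2 := by
    have hJ' : (#J' : ℝ) ≤ c * r / 4 :=
      (Nat.mono_cast (card_le_card subset_union_right)).trans hJJ'
    have := Nat.mono_cast (α := ℝ) (card_union_le J' (J ∪ nbhd A IclJ))
    push_cast at this
    linarith
  have hIclJ_card : 4 * #IclJ ≤ r := hexp.mul_card_le hc hIclJ.1.1 hIclJ.1.2 four_pos hJ
  have hIclAll_card : 4 * #IclAll ≤ r :=
    hexp.mul_card_le hc hIclAll.1.1 hIclAll.1.2 four_pos hJJ'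
  have hIcl'_card : 2 * #Icl' ≤ r := hexp.mul_card_le hc hIcl'.1.2.1
    ((bdry_subset_bdry_restrict_union hA' Icl').trans (union_subset_union_left hIcl'.1.2.2))
    two_pos hJ'_ext
  have hJ_sub : IclJ ⊆ IclAll := hIclAll.subset (hIclJ.1.2.trans subset_union_left)
    ((card_union_le _ _).trans (by omega))
  have hK : IclAll \ IclJ ⊆ Icl' := hIcl'.subset
    (hIclJ.sdiff_subset_of_restrict hJ_sub (by omega) hLset)
    (bdry_restrict_sdiff_subset hA' hJ_sub hIclAll.1.2)
    ((card_union_le _ _).trans <| by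
      have := card_le_card (sdiff_subset (s := IclAll) (t := IclJ))
      omega)
  have hsup : IclJ ∪ Icl' ⊆ IclAll := hIclAll.subset
    (bdry_union_restrict_subset hA' hIclJ.1.2 hIcl'.1.2.2)
    ((card_union_le _ _).trans (by have := card_union_le IclJ Icl'; omega))
  have hIclAll_eq : IclAll = IclJ ∪ Icl' := subset_antisymm
    ((union_sdiff_of_subset hJ_sub).symm.subset.trans (union_subset_union_right hK)) hsup
  refine ⟨hIclAll_eq, ?_⟩
  rw [hIclAll_eq, nbhd_union, nbhd_eq_sdiff_of_restrict hA']
  ext b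
  simp only [mem_union, mem_sdiff]
  tauto

/-- For an `(r, Δ, c)`-boundary expander `G`, with `|Ext_G(J)| ≤ cr/4`,
`G' = G \ Ext_G(J)`, and `J' ⊆ R \ Ext_G(J)` with `|Ext_G(J ∪ J')| ≤ cr/4`, we have
`Cl_G(J ∪ J') = Cl_G(J) ∪ Cl_{G'}(J')` and `Ext_G(J) ∪ Ext_{G'}(J') = Ext_G(J ∪ J')`
(hence `G' \ Ext_{G'}(J') = G \ Ext_G(J ∪ J')`). -/
theorem closure_step_by_step (A : L → R → Prop) [∀ a b, Decidable (A a b)]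
    (r Δ : ℕ) (c : ℝ) (hc : 0 < c)
    (hexp : IsBoundaryExpander A r Δ c)
    (J : Finset R) (IclJ : Finset L) (hIclJ : IsClosure A r J IclJ)
    (ext : Finset R) (hextdef : ext = J ∪ nbhd A IclJ)
    (hext : (ext.card : ℝ) ≤ c * r / 4)
    -- the subgraph `G' = G \ Ext_G(J)`
    (A' : L → R → Prop) [∀ a b, Decidable (A' a b)]
    (hA' : ∀ a b, A' a b ↔ A a b ∧ b ∉ ext)
    (Lset : Finset L) (hLset : ∀ a, a ∈ Lset ↔ ∃ b, A a b ∧ b ∉ ext)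
    (J' : Finset R) (hJ' : ∀ b ∈ J', b ∉ ext)
    (Icl' : Finset L) (hIcl' : IsClosureIn A' Lset r J' Icl')
    (IclAll : Finset L) (hIclAll : IsClosure A r (J ∪ J') IclAll)
    (hextAll : (((J ∪ J') ∪ nbhd A IclAll).card : ℝ) ≤ c * r / 4) :
    IclAll = IclJ ∪ Icl' ∧
    ext ∪ (J' ∪ nbhd A' Icl') = (J ∪ J') ∪ nbhd A IclAll :=
  closure_step_by_step_general A r Δ c hc hexp J IclJ hIclJ ext hextdef hext A' hA' Lset hLset J'
    Icl' hIcl' IclAll hIclAll hextAll
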